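/- Let k ≥ 1, let p^(1),…,p^(k+1) be pairwise distinct s–t paths with c(p^(1)) ≤ … ≤ c(p^(k+1)) such that every s–t path not equal to any p^(i) has cost at least c(p^(k+1)), and assume c(p^(k)) < c(p^(k+1)). Let S be a set of k distinct cascading via-paths such that every CVP not in S has cost at least the maximum cost of a CVP in S (the k shortest CVPs), let V′ be the union of the vertex sets of the maximal RPCs associated with the CVPs in S, and let G′ = (V′, E′) with E′ = {(u,w) ∈ E : u ∈ V′ and w ∈ V′}, with edge weights inherited from G. Then each p^(i), 1 ≤ i ≤ k, is a path of G′, and every s–t path of G′ not equal to any of p^(1),…,p^(k) has cost strictly greater than c(p^(k)); i.e., the k shortest s–t paths of G′ are the same as the k shortest s–t paths of G. -/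

import Mathlib

variable {V : Type*}

/-- `p` is a path from `u` to `w` in the digraph with edge relation `E`:
a nonempty finite sequence of vertices beginning at `u` and ending at `w`
in which every consecutive pair of vertices is an edge. -/
def IsPath (E : V → V → Prop) (p : List V) (u w : V) : Prop :=
  p ≠ [] ∧ p.head? = some u ∧ p.getLast? = some w ∧ p.Chain' E

/-- The cost of a path: the sum of the weights of its edges. -/
def pathCost (c : V → V → ℝ) (p : List V) : ℝ :=
  ((p.zip p.tail).map fun e => c e.1 e.2).sum

/-- A shortest path from `u` to `w`: a path from `u` to `w` of minimum cost. -/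
def IsShortestPath (E : V → V → Prop) (c : V → V → ℝ) (p : List V) (u w : V) : Prop :=
  IsPath E p u w ∧ ∀ q, IsPath E q u w → pathCost c p ≤ pathCost c q

/-- A via-path for `v`: an `s`–`t` path of minimum cost among all `s`–`t`
paths passing through `v`. -/
def IsViaPath (E : V → V → Prop) (c : V → V → ℝ) (s t v : V) (p : List V) : Prop :=
  IsPath E p s t ∧ v ∈ p ∧ ∀ q, IsPath E q s t → v ∈ q → pathCost c p ≤ pathCost c q

/-- The minimum cost of an `s`–`t` path passing through `v`. -/
noncomputable def viaCost (E : V → V → Prop) (c : V → V → ℝ) (s t v : V) : ℝ :=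
  sInf (pathCost c '' {p | IsPath E p s t ∧ v ∈ p})

/-- A predecessor shortest path tree rooted at the source `s`: a map `b`
assigning to each vertex `v ≠ s` a vertex `b v` with an edge from `b v` to `v`,
such that iterating `b` from any `v` terminates at `s` and the resulting path
`pathTo v` (read from `s` to `v`) is a shortest path from `s` to `v`. -/
structure PredSPT (E : V → V → Prop) (c : V → V → ℝ) (s : V) where
  b : V → V
  pathTo : V → List V
  edge : ∀ v, v ≠ s → E (b v) v
  pathTo_src : pathTo s = [s]
  pathTo_step : ∀ v, v ≠ s → pathTo v = pathTo (b v) ++ [v]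
  shortest : ∀ v, IsShortestPath E c (pathTo v) s v

/-- A successor shortest path tree rooted at the target `t`: a map `f`
assigning to each vertex `v ≠ t` a vertex `f v` with an edge from `v` to `f v`,
such that iterating `f` from any `v` terminates at `t` and the resulting path
`pathFrom v` is a shortest path from `v` to `t`. -/
structure SuccSPT (E : V → V → Prop) (c : V → V → ℝ) (t : V) where
  f : V → V
  pathFrom : V → List V
  edge : ∀ v, v ≠ t → E v (f v)
  pathFrom_tgt : pathFrom t = [t]
  pathFrom_step : ∀ v, v ≠ t → pathFrom v = v :: pathFrom (f v)
  shortest : ∀ v, IsShortestPath E c (pathFrom v) v t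

variable {E : V → V → Prop} {c : V → V → ℝ} {s t : V}

/-- The cascading via-path (CVP) of a vertex `v`: the tree path `p̃_{s,v}`
followed by the tree path `p̃_{v,t}`. -/
def CVP (B : PredSPT E c s) (F : SuccSPT E c t) (v : V) : List V :=
  B.pathTo v ++ (F.pathFrom v).tail

/-- A reciprocal pointer chain (RPC): a nonempty sequence of vertices
`(v_1, …, v_n)` such that for all `1 ≤ i < n`, `b (v_{i+1}) = v_i` and
`f (v_i) = v_{i+1}` (as pointers of the two shortest path trees, so in
particular `v_{i+1} ≠ s` and `v_i ≠ t`). -/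
def IsRPC (B : PredSPT E c s) (F : SuccSPT E c t) (r : List V) : Prop :=
  r ≠ [] ∧ r.Chain' fun x y => y ≠ s ∧ x ≠ t ∧ B.b y = x ∧ F.f x = y

/-- A maximal RPC: an RPC whose set of vertices is not a (strict) subset of the
vertex set of any other RPC. -/
def IsMaximalRPC [DecidableEq V] (B : PredSPT E c s) (F : SuccSPT E c t)
    (r : List V) : Prop :=
  IsRPC B F r ∧
    ∀ r', IsRPC B F r' → r.toFinset ⊆ r'.toFinset → r'.toFinset = r.toFinset

/-- The Jaccard distance between the vertex sets of two paths. -/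
noncomputable def jaccardDist [DecidableEq V] (p q : List V) : ℝ :=
  1 - ((p.toFinset ∩ q.toFinset).card : ℝ) / ((p.toFinset ∪ q.toFinset).card : ℝ)

/-- A plateau: a nonempty sequence of vertices in which every consecutive pair
is an edge and all vertices have the same minimum via-path cost. -/
def IsPlateau (E : V → V → Prop) (c : V → V → ℝ) (s t : V) (q : List V) : Prop :=
  q ≠ [] ∧ q.Chain' fun x y => E x y ∧ viaCost E c s t x = viaCost E c s t y

/-- A maximal plateau: a plateau whose set of vertices is not a (strict) subset
of the vertex set of any other plateau. -/
def IsMaximalPlateau [DecidableEq V] (E : V → V → Prop) (c : V → V → ℝ)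
    (s t : V) (q : List V) : Prop :=
  IsPlateau E c s t q ∧
    ∀ q', IsPlateau E c s t q' → q.toFinset ⊆ q'.toFinset → q'.toFinset = q.toFinset

/-!
The CVP of a vertex `v` is a shortest `s`–`t` path through `v`, so every vertex `v` of one of the
`k` shortest paths `p` has a CVP costing at most `c(p) ≤ c(p^(k)) < c(p^(k+1))`. If that CVP were
not in `S`, then it would cost at least every member of `S`, and `S` together with it would be
`k + 1` distinct `s`–`t` paths strictly cheaper than `p^(k+1)`; but only `p^(1), …, p^(k)` are.
So the CVP of `v` lies in `S`, and `v` lies in some maximal RPC, hence in `V'`. The second claim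
already holds in `G`, of which `G'` is a subgraph.
-/

lemma pathCost_cons_cons (c : V → V → ℝ) (a b : V) (l : List V) :
    pathCost c (a :: b :: l) = c a b + pathCost c (b :: l) := by
  simp [pathCost]

lemma pathCost_append_cons (c : V → V → ℝ) (l₁ l₂ : List V) (v : V) :
    pathCost c (l₁ ++ v :: l₂) = pathCost c (l₁ ++ [v]) + pathCost c (v :: l₂) := by
  induction l₁ with
  | nil => simp [pathCost]
  | cons a l ih =>
    cases l with
    | nil => simp [pathCost]
    | cons b l =>
      simp only [List.cons_append, pathCost_cons_cons] at ih ⊢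
      rw [ih, add_assoc]

lemma pathCost_append_tail {p q : List V} {v : V} (hp : p.getLast? = some v)
    (hq : q.head? = some v) : pathCost c (p ++ q.tail) = pathCost c p + pathCost c q := by
  obtain ⟨l₁, rfl⟩ := List.getLast?_eq_some_iff.1 hp
  obtain ⟨l₂, rfl⟩ := List.head?_eq_some_iff.1 hq
  simpa using pathCost_append_cons c l₁ l₂ v

lemma IsPath.append_tail {p q : List V} {u v w : V} (hp : IsPath E p u v) (hq : IsPath E q v w) :
    IsPath E (p ++ q.tail) u w := by
  obtain ⟨-, hpu, hpv, hpE⟩ := hp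
  obtain ⟨-, hqv, hqw, hqE⟩ := hq
  obtain ⟨l₁, rfl⟩ := List.getLast?_eq_some_iff.1 hpv
  obtain ⟨l₂, rfl⟩ := List.head?_eq_some_iff.1 hqv
  refine ⟨by simp, ?_, ?_, ?_⟩
  · cases l₁ <;> simpa using hpu
  · simpa [List.getLast?_append] using hqw
  · show List.IsChain E _
    simpa using List.IsChain.append_overlap hpE hqE (List.cons_ne_nil v [])

lemma IsPath.exists_split {q : List V} {u v w : V} (hq : IsPath E q u w) (hv : v ∈ q) :
    ∃ q₁ q₂, IsPath E q₁ u v ∧ IsPath E q₂ v w ∧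
      pathCost c q = pathCost c q₁ + pathCost c q₂ := by
  obtain ⟨l₁, l₂, rfl⟩ := List.append_of_mem hv
  obtain ⟨-, hu, hw, hE⟩ := hq
  refine ⟨l₁ ++ [v], v :: l₂, ⟨by simp, ?_, by simp, hE.prefix ⟨l₂, by simp⟩⟩,
    ⟨by simp, rfl, ?_, hE.suffix ⟨l₁, rfl⟩⟩, pathCost_append_cons c l₁ l₂ v⟩
  · cases l₁ <;> simpa using hu
  · simpa [List.getLast?_append] using hw

lemma IsPath.mono {E' : V → V → Prop} (h : ∀ a b, E a b → E' a b) {p : List V} {u w : V}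
    (hp : IsPath E p u w) : IsPath E' p u w :=
  ⟨hp.1, hp.2.1, hp.2.2.1, List.IsChain.imp (fun a b hab => h a b hab) hp.2.2.2⟩

lemma IsPath.induce {V' : Set V} {p : List V} {u w : V} (hp : IsPath E p u w)
    (hV' : ∀ v ∈ p, v ∈ V') : IsPath (fun a b => E a b ∧ a ∈ V' ∧ b ∈ V') p u w :=
  ⟨hp.1, hp.2.1, hp.2.2.1, hp.2.2.2.imp_of_mem_imp fun a b ha hb hab => ⟨hab, hV' a ha, hV' b hb⟩⟩

lemma isPath_CVP (B : PredSPT E c s) (F : SuccSPT E c t) (v : V) : IsPath E (CVP B F v) s t :=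
  (B.shortest v).1.append_tail (F.shortest v).1

lemma isViaPath_CVP (B : PredSPT E c s) (F : SuccSPT E c t) (v : V) :
    IsViaPath E c s t v (CVP B F v) := by
  have hto := (B.shortest v).1
  have hfrom := (F.shortest v).1
  refine ⟨isPath_CVP B F v, ?_, fun q hq hv => ?_⟩
  · obtain ⟨l, hl⟩ := List.getLast?_eq_some_iff.1 hto.2.2.1
    simp [CVP, hl]
  · obtain ⟨q₁, q₂, hq₁, hq₂, hcost⟩ := hq.exists_split (c := c) hv
    rw [CVP, pathCost_append_tail hto.2.2.1 hfrom.2.1, hcost]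
    exact add_le_add ((B.shortest v).2 q₁ hq₁) ((F.shortest v).2 q₂ hq₂)

lemma exists_isMaximalRPC_mem [Fintype V] [DecidableEq V] (B : PredSPT E c s)
    (F : SuccSPT E c t) (v : V) : ∃ r, IsMaximalRPC B F r ∧ v ∈ r := by
  let rpcSets : Set (Finset V) := {A | ∃ r, IsRPC B F r ∧ v ∈ r ∧ r.toFinset = A}
  have hne : rpcSets.Nonempty := ⟨{v}, [v], ⟨by simp, List.isChain_singleton v⟩, by simp, rfl⟩
  obtain ⟨_, ⟨r, hr, hvr, rfl⟩, hmax⟩ := rpcSets.toFinite.exists_maximal hne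
  refine ⟨r, ⟨hr, fun r' hr' hsub => ?_⟩, hvr⟩
  have hvr' : v ∈ r' := List.mem_toFinset.1 (hsub (List.mem_toFinset.2 hvr))
  exact (hmax ⟨r', hr', hvr', rfl⟩ hsub).antisymm hsub

section KShortest

variable {k : ℕ} {P : Fin (k + 1) → List V}

lemma card_le_of_forall_pathCost_lt
    (hrest : ∀ q, IsPath E q s t → (∀ i, q ≠ P i) → pathCost c (P (Fin.last k)) ≤ pathCost c q)
    {T : Finset (List V)}
    (hT : ∀ q ∈ T, IsPath E q s t ∧ pathCost c q < pathCost c (P (Fin.last k))) : T.card ≤ k := by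
  classical
  have hsub : T ⊆ Finset.univ.image (P ∘ Fin.castSucc) := by
    intro q hq
    obtain ⟨hpath, hlt⟩ := hT q hq
    by_cases hP : ∀ i, q ≠ P i
    · exact absurd (hrest q hpath hP) hlt.not_ge
    push Not at hP
    obtain ⟨i, rfl⟩ := hP
    obtain ⟨j, rfl⟩ := Fin.exists_castSucc_eq.2 fun hi : i = Fin.last k => by
      subst hi
      exact lt_irrefl _ hlt
    simp
  calc T.card ≤ (Finset.univ.image (P ∘ Fin.castSucc)).card := Finset.card_le_card hsub
    _ ≤ (Finset.univ : Finset (Fin k)).card := Finset.card_image_le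
    _ = k := by simp

lemma CVP_mem_of_pathCost_lt [DecidableEq V]
    (hrest : ∀ q, IsPath E q s t → (∀ i, q ≠ P i) → pathCost c (P (Fin.last k)) ≤ pathCost c q)
    {B : PredSPT E c s} {F : SuccSPT E c t}
    {S : Finset (List V)} (hScard : S.card = k) (hScvp : ∀ p ∈ S, ∃ v, p = CVP B F v)
    (hSmin : ∀ w : V, CVP B F w ∉ S → ∀ p ∈ S, pathCost c p ≤ pathCost c (CVP B F w))
    {v : V} (hv : pathCost c (CVP B F v) < pathCost c (P (Fin.last k))) : CVP B F v ∈ S := by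
  by_contra hnS
  have hcard := card_le_of_forall_pathCost_lt hrest (T := insert (CVP B F v) S) fun q hq => by
    rcases Finset.mem_insert.1 hq with rfl | hq
    · exact ⟨isPath_CVP B F v, hv⟩
    · obtain ⟨w, rfl⟩ := hScvp _ hq
      exact ⟨isPath_CVP B F w, (hSmin v hnS _ hq).trans_lt hv⟩
  rw [Finset.card_insert_of_notMem hnS, hScard] at hcard
  omega

lemma pathCost_last_le_of_forall_ne
    (hrest : ∀ q, IsPath E q s t → (∀ i, q ≠ P i) → pathCost c (P (Fin.last k)) ≤ pathCost c q)
    {q : List V} (hq : IsPath E q s t)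
    (hne : ∀ i : Fin (k + 1), (i : ℕ) < k → q ≠ P i) :
    pathCost c (P (Fin.last k)) ≤ pathCost c q := by
  by_cases hP : ∀ i, q ≠ P i
  · exact hrest q hq hP
  push Not at hP
  obtain ⟨i, rfl⟩ := hP
  obtain rfl : i = Fin.last k := by
    by_contra hi
    exact hne i (Fin.val_lt_last hi) rfl
  exact le_rfl

end KShortest

/-- Let `p^(1), …, p^(k+1)` be the `k+1` shortest `s`–`t` paths
(pairwise distinct, nondecreasing costs, all other paths cost at least
`c(p^(k+1))`), with `c(p^(k)) < c(p^(k+1))`. Let `S` be a set of `k` distinct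
CVPs such that every CVP outside `S` costs at least the maximum cost in `S`,
let `V'` be the union of the vertex sets of the maximal RPCs associated with
the CVPs in `S`, and let `G' = (V', E')` be the induced subgraph. Then the `k`
shortest `s`–`t` paths of `G'` are the same as those of `G`: each `p^(i)`,
`1 ≤ i ≤ k`, is a path of `G'`, and every other `s`–`t` path of `G'` costs
strictly more than `c(p^(k))`. -/
theorem k_shortest_paths_in_reduced_graph [Fintype V] [DecidableEq V]
    {E : V → V → Prop} {c : V → V → ℝ} {s t : V}
    (B : PredSPT E c s) (F : SuccSPT E c t)
    (k : ℕ)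
    (P : Fin (k + 1) → List V)
    (hpath : ∀ i, IsPath E (P i) s t)
    (hmono : ∀ i j : Fin (k + 1), i ≤ j → pathCost c (P i) ≤ pathCost c (P j))
    (hrest : ∀ q, IsPath E q s t → (∀ i, q ≠ P i) →
      pathCost c (P (Fin.last k)) ≤ pathCost c q)
    (hgap : pathCost c (P ⟨k - 1, by omega⟩) < pathCost c (P (Fin.last k)))
    (S : Finset (List V)) (hScard : S.card = k)
    (hScvp : ∀ p ∈ S, ∃ v, p = CVP B F v)
    (hSmin : ∀ w : V, CVP B F w ∉ S → ∀ p ∈ S, pathCost c p ≤ pathCost c (CVP B F w))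
    (V' : Set V)
    (hV' : V' = {x | ∃ r, IsMaximalRPC B F r ∧ x ∈ r ∧ CVP B F x ∈ S})
    (E' : V → V → Prop)
    (hE' : E' = fun a b => E a b ∧ a ∈ V' ∧ b ∈ V') :
    (∀ i : Fin (k + 1), (i : ℕ) < k → IsPath E' (P i) s t) ∧
    (∀ q, IsPath E' q s t → (∀ i : Fin (k + 1), (i : ℕ) < k → q ≠ P i) →
      pathCost c (P ⟨k - 1, by omega⟩) < pathCost c q) := by
  subst hE' hV'
  refine ⟨fun i hi => (hpath i).induce fun v hv => ?_, fun q hq hne => ?_⟩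
  · have hPi : pathCost c (P i) < pathCost c (P (Fin.last k)) :=
      (hmono i _ (Fin.le_def.2 (show (i : ℕ) ≤ k - 1 by omega))).trans_lt hgap
    obtain ⟨r, hr, hvr⟩ := exists_isMaximalRPC_mem B F v
    exact ⟨r, hr, hvr, CVP_mem_of_pathCost_lt hrest hScard hScvp hSmin
      (((isViaPath_CVP B F v).2.2 _ (hpath i) hv).trans_lt hPi)⟩
  · exact hgap.trans_le
      (pathCost_last_le_of_forall_ne hrest (hq.mono fun _ _ h => h.1) hne)
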